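/- Let G be a finite additive abelian group and let Σ=(Γ=(V,E),σ) be a signed graph with an orientation ω compatible with σ. Then the number q_Σ(G) of nowhere-zero G-flows of Σ is given by q_Σ(G) = (−1)^{|E|−|V|+k(Γ)} · T_Σ(0, 1−|G|, 1−|G|/|2G|), where k(Γ) is the number of connected components of Γ. -/

import Mathlib

attribute [local instance] Classical.propDecidable

noncomputable section SignedGraphs

/-- A signed graph: a multigraph with ordered pairs of endpoints (the order is
an artefact of the encoding) together with a sign `±1` on each edge. -/
structure SGraph (V : Type*) (E : Type*) where
  ends : E → V × V
  sign : E → ℤˣ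

namespace SGraph

variable {V E : Type*}

/-- Endpoint of `e` on side `b`; a loop has both endpoints equal, but its two
half-edges are distinguished by the side `b`. -/
def endpt (Γ : SGraph V E) (e : E) (b : Bool) : V :=
  cond b (Γ.ends e).1 (Γ.ends e).2

/-- `e` is a loop of the underlying graph. -/
def IsLoop (Γ : SGraph V E) (e : E) : Prop := (Γ.ends e).1 = (Γ.ends e).2

/-- Walks in a signed multigraph: a step traverses an edge `e` in direction `d`
(from the side-`d` endpoint to the other endpoint). -/
inductive Walk (Γ : SGraph V E) : V → V → Type _
  | nil (v : V) : Walk Γ v v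
  | cons (e : E) (d : Bool) {w : V} (p : Walk Γ (Γ.endpt e (!d)) w) : Walk Γ (Γ.endpt e d) w

namespace Walk

variable {Γ : SGraph V E}

/-- The list of vertices visited by a walk (including the final one). -/
def verts : ∀ {u v : V}, Γ.Walk u v → List V
  | _, _, .nil x => [x]
  | _, _, .cons e d p => Γ.endpt e d :: p.verts

/-- The list of edges traversed by a walk. -/
def edges : ∀ {u v : V}, Γ.Walk u v → List E
  | _, _, .nil _ => []
  | _, _, .cons e _ p => e :: p.edges

/-- The list of (edge, direction) steps of a walk. -/
def steps : ∀ {u v : V}, Γ.Walk u v → List (E × Bool)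
  | _, _, .nil _ => []
  | _, _, .cons e d p => (e, d) :: p.steps

/-- The sources of the steps of a walk, i.e. all visited vertices except the last. -/
def srcs {u v : V} (W : Γ.Walk u v) : List V := W.verts.dropLast

/-- The sign of a walk: the product of the signs of its edges. -/
def sgn : ∀ {u v : V}, Γ.Walk u v → ℤˣ
  | _, _, .nil _ => 1
  | _, _, .cons e _ p => Γ.sign e * p.sgn

/-- Concatenation of walks. -/
def append : ∀ {u v w : V}, Γ.Walk u v → Γ.Walk v w → Γ.Walk u w
  | _, _, _, .nil _, q => q
  | _, _, _, .cons e d p, q => .cons e d (p.append q)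

/-- The sum `Σᵢ f(eᵢ)` of the values of `f` on the edges of the walk,
with multiplicity. -/
def edgeSum {G : Type*} [AddCommGroup G] (f : E → G) {u v : V} (W : Γ.Walk u v) : G :=
  (W.edges.map f).sum

/-- The sum `Σᵢ ω(vᵢ,eᵢ)·(Π_{j<i} σ(eⱼ))·f(eᵢ)` along a walk, where `ω(vᵢ,eᵢ)`
is the value of `ω` on the half-edge by which the walk leaves `vᵢ`. -/
def tensionSum {G : Type*} [AddCommGroup G] (ω : E → Bool → ℤˣ) (f : E → G) :
    ∀ {u v : V}, Γ.Walk u v → G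
  | _, _, .nil _ => 0
  | _, _, .cons e d p => ((ω e d : ℤ) • f e) + ((Γ.sign e : ℤ) • tensionSum ω f p)

/-- `Q` is the reverse of the walk `P`. -/
def IsReverseOf {u v : V} (Q : Γ.Walk v u) (P : Γ.Walk u v) : Prop :=
  Q.steps = P.steps.reverse.map fun s => (s.1, !s.2)

end Walk

/-- A closed walk is a cycle if it is nontrivial, visits no vertex twice and
uses no edge twice. -/
def IsCycle (Γ : SGraph V E) {v : V} (W : Γ.Walk v v) : Prop :=
  W.edges ≠ [] ∧ W.srcs.Nodup ∧ W.edges.Nodup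

/-- A balanced (positive) cycle. -/
def IsBalancedCycle (Γ : SGraph V E) {v : V} (W : Γ.Walk v v) : Prop :=
  Γ.IsCycle W ∧ W.sgn = 1

/-- An unbalanced (negative) cycle. -/
def IsUnbalancedCycle (Γ : SGraph V E) {v : V} (W : Γ.Walk v v) : Prop :=
  Γ.IsCycle W ∧ W.sgn = -1

/-- A nontrivial walk that is a simple path (all visited vertices distinct). -/
def IsPathWalk (Γ : SGraph V E) {u v : V} (P : Γ.Walk u v) : Prop :=
  P.edges ≠ [] ∧ P.verts.Nodup

/-- A tight handcuff at `v`: two edge-disjoint unbalanced cycles sharing exactly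
the vertex `v`. -/
def IsTightHandcuff (Γ : SGraph V E) {v : V} (C₁ C₂ : Γ.Walk v v) : Prop :=
  Γ.IsUnbalancedCycle C₁ ∧ Γ.IsUnbalancedCycle C₂ ∧
    (∀ x ∈ C₁.srcs, x ∈ C₂.srcs → x = v) ∧ ∀ e ∈ C₁.edges, e ∉ C₂.edges

/-- A loose handcuff: two vertex-disjoint unbalanced cycles `C₁` (at `u`) and
`C₂` (at `w`) joined by a simple path `P` from `u` to `w` meeting the cycles
exactly in its endpoints. -/
def IsLooseHandcuff (Γ : SGraph V E) {u w : V} (C₁ : Γ.Walk u u) (P : Γ.Walk u w)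
    (C₂ : Γ.Walk w w) : Prop :=
  Γ.IsUnbalancedCycle C₁ ∧ Γ.IsUnbalancedCycle C₂ ∧ Γ.IsPathWalk P ∧
    (∀ x ∈ C₁.srcs, x ∉ C₂.srcs) ∧
    (∀ x ∈ P.verts, x ∈ C₁.srcs → x = u) ∧
    (∀ x ∈ P.verts, x ∈ C₂.srcs → x = w) ∧
    ∀ e ∈ P.edges, e ∉ C₁.edges ∧ e ∉ C₂.edges

/-- The canonical closed walks traversing a circuit of the signed graph:
a balanced cycle, a tight handcuff `C₁ * C₂`, or a loose handcuff
`C₁ * P * C₂ * P⁻¹` (the circuit path edges being used twice). -/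
def IsBasicCircuitWalk (Γ : SGraph V E) {v : V} (W : Γ.Walk v v) : Prop :=
  Γ.IsBalancedCycle W ∨
    (∃ C₁ C₂ : Γ.Walk v v, Γ.IsTightHandcuff C₁ C₂ ∧ W = C₁.append C₂) ∨
    ∃ (w : V) (C₁ : Γ.Walk v v) (P : Γ.Walk v w) (C₂ : Γ.Walk w w) (Q : Γ.Walk w v),
      Γ.IsLooseHandcuff C₁ P C₂ ∧ Q.IsReverseOf P ∧
        W = C₁.append (P.append (C₂.append Q))

/-- A circuit walk: a rotation of a basic circuit walk. -/
def IsCircuitWalk (Γ : SGraph V E) {v : V} (W : Γ.Walk v v) : Prop :=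
  ∃ (u : V) (A : Γ.Walk u v) (B : Γ.Walk v u),
    W = B.append A ∧ Γ.IsBasicCircuitWalk (A.append B)

/-- `e` is a circuit path edge: it lies on the connecting path of an unbalanced
loose handcuff. -/
def IsCircuitPathEdge (Γ : SGraph V E) (e : E) : Prop :=
  ∃ (u w : V) (C₁ : Γ.Walk u u) (P : Γ.Walk u w) (C₂ : Γ.Walk w w),
    Γ.IsLooseHandcuff C₁ P C₂ ∧ e ∈ P.edges

/-- Adjacency via an edge. -/
def Adj (Γ : SGraph V E) (a b : V) : Prop := ∃ e, Γ.ends e = (a, b) ∨ Γ.ends e = (b, a)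

/-- The set of connected components. -/
def Components (Γ : SGraph V E) : Type _ := Quot Γ.Adj

/-- The connected component of a vertex. -/
def comp (Γ : SGraph V E) (v : V) : Γ.Components := Quot.mk _ v

/-- The number `k(Γ)` of connected components. -/
def kAll (Γ : SGraph V E) : ℕ := Nat.card Γ.Components

/-- A connected component is balanced if every cycle it contains is balanced. -/
def IsBalancedComponent (Γ : SGraph V E) (c : Γ.Components) : Prop :=
  ∀ v : V, Γ.comp v = c → ∀ W : Γ.Walk v v, Γ.IsCycle W → W.sgn = 1

/-- The number `k_b(Σ)` of balanced connected components. -/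
def kb (Γ : SGraph V E) : ℕ := Nat.card {c : Γ.Components // Γ.IsBalancedComponent c}

/-- The number `k_u(Σ)` of unbalanced connected components. -/
def ku (Γ : SGraph V E) : ℕ := Nat.card {c : Γ.Components // ¬ Γ.IsBalancedComponent c}

/-- A signed graph is balanced if all its cycles are balanced. -/
def Balanced (Γ : SGraph V E) : Prop :=
  ∀ (v : V) (W : Γ.Walk v v), Γ.IsCycle W → W.sgn = 1

/-- A signed graph is connected if it has exactly one connected component. -/
def Connected (Γ : SGraph V E) : Prop := Γ.kAll = 1

/-- The spanning subgraph `Σ \ Aᶜ` with edge set `A`. -/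
def restrict (Γ : SGraph V E) (A : Set E) : SGraph V A :=
  { ends := fun e => Γ.ends e, sign := fun e => Γ.sign e }

/-- The signed Tutte polynomial (as a function of `x`, `y`, `z`):
`T_Σ(X,Y,Z) = Σ_{A⊆E} (X−1)^{k(Σ\Aᶜ)−k(Σ)} (Y−1)^{|A|−|V|+k_b(Σ\Aᶜ)} (Z−1)^{k_u(Σ\Aᶜ)}`. -/
def signedTutte {K : Type*} [CommRing K] (Γ : SGraph V E) (x y z : K) : K :=
  ∑ᶠ A : Finset E,
    (x - 1) ^ ((Γ.restrict (A : Set E)).kAll - Γ.kAll) *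
      (y - 1) ^ ((A.card + (Γ.restrict (A : Set E)).kb) - Nat.card V) *
        (z - 1) ^ (Γ.restrict (A : Set E)).ku

/-- Deletion of an edge. -/
def deleteEdge (Γ : SGraph V E) (e : E) : SGraph V {e' : E // e' ≠ e} :=
  { ends := fun e' => Γ.ends e'.1, sign := fun e' => Γ.sign e'.1 }

/-- The relation identifying the two endpoints of `e`. -/
def contractRel (Γ : SGraph V E) (e : E) (a b : V) : Prop := (a, b) = Γ.ends e

/-- Contraction of an edge: the two endpoints are identified and the edge is
deleted.  (For a loop this is just deletion, as the identification is trivial.) -/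
def contract (Γ : SGraph V E) (e : E) : SGraph (Quot (Γ.contractRel e)) {e' : E // e' ≠ e} :=
  { ends := fun e' => (Quot.mk _ (Γ.ends e'.1).1, Quot.mk _ (Γ.ends e'.1).2),
    sign := fun e' => Γ.sign e'.1 }

/-- `e` is a bridge: its deletion increases the number of connected components. -/
def IsBridge (Γ : SGraph V E) (e : E) : Prop := Γ.kAll < (Γ.deleteEdge e).kAll

/-- An orientation of the half-edges, compatible with the signature. -/
def IsCompatible (Γ : SGraph V E) (ω : E → Bool → ℤˣ) : Prop :=
  ∀ e, Γ.sign e = -(ω e true * ω e false)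

/-- A `G`-flow: Kirchhoff's law holds at every vertex. -/
def IsFlow (Γ : SGraph V E) (ω : E → Bool → ℤˣ) {G : Type*} [AddCommGroup G]
    (f : E → G) : Prop :=
  ∀ v : V,
    (∑ᶠ e : E, ((if Γ.endpt e true = v then (ω e true : ℤ) • f e else 0) +
      (if Γ.endpt e false = v then (ω e false : ℤ) • f e else 0))) = 0

/-- A `G`-tension: the alternating sum along every circuit walk vanishes. -/
def IsTension (Γ : SGraph V E) (ω : E → Bool → ℤˣ) {G : Type*} [AddCommGroup G]
    (f : E → G) : Prop :=
  ∀ (v : V) (W : Γ.Walk v v), Γ.IsCircuitWalk W → W.tensionSum ω f = 0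

end SGraph

/-- The doubling homomorphism `x ↦ x + x = 2x` of an abelian group. -/
def doubleHom (G : Type*) [AddCommGroup G] : G →+ G :=
  AddMonoidHom.mk' (fun x => x + x) (fun a b => add_add_add_comm a b a b)

/-- The subgroup `2G = {2x : x ∈ G}`. -/
def twoG (G : Type*) [AddCommGroup G] : AddSubgroup G := (doubleHom G).range

/-- The `2`-torsion subgroup `G₂ = {x ∈ G : 2x = 0}`. -/
def torsion2 (G : Type*) [AddCommGroup G] : AddSubgroup G := (doubleHom G).ker

namespace SGraph

variable {V E : Type*}

/-- A `G`-potential difference: a `G`-tension whose sum around every unbalanced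
cycle lies in `2G`. -/
def IsPotentialDifference (Γ : SGraph V E) (ω : E → Bool → ℤˣ) {G : Type*} [AddCommGroup G]
    (f : E → G) : Prop :=
  Γ.IsTension ω f ∧
    ∀ (v : V) (W : Γ.Walk v v), Γ.IsUnbalancedCycle W → W.edgeSum f ∈ twoG G

end SGraph

namespace SGraph

variable {V E : Type*}

/-- Proper coloring by elements of a set `X` with involution `ι`: adjacent
endpoints of a positive edge get different colors, and for a negative edge the
`ι`-image of one endpoint's color differs from the other endpoint's color. -/
def IsProperInvColoring (Γ : SGraph V E) {X : Type*} (ι : X → X) (f : V → X) : Prop :=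
  ∀ e : E, (Γ.sign e = 1 → f ((Γ.ends e).1) ≠ f ((Γ.ends e).2)) ∧
    (Γ.sign e = -1 → ι (f ((Γ.ends e).1)) ≠ f ((Γ.ends e).2))

/-- A proper `G`-coloring: for every edge `e = uv`, `f(u) ≠ f(v)` if `e` is
positive and `-f(u) ≠ f(v)` if `e` is negative, i.e. `σ(e)•f(u) ≠ f(v)`. -/
def IsProperColoring (Γ : SGraph V E) {G : Type*} [AddCommGroup G] (f : V → G) : Prop :=
  ∀ e : E, ((Γ.sign e : ℤ) • f ((Γ.ends e).1)) ≠ f ((Γ.ends e).2)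

/-- Zaslavsky's proper `n`-coloring: colors in `{0, ±1, …, ±n}` with
`f(u) ≠ σ(e)·f(v)` for every edge `e = uv`. -/
def IsProperNColoring (Γ : SGraph V E) (n : ℕ) (f : V → ℤ) : Prop :=
  (∀ v, |f v| ≤ (n : ℤ)) ∧
    ∀ e : E, f ((Γ.ends e).1) ≠ (Γ.sign e : ℤ) * f ((Γ.ends e).2)

/-- `T ⊆ E` is a spanning tree: the spanning subgraph `(V,T)` is connected and
contains no cycle. -/
def IsSpanningTree (Γ : SGraph V E) (T : Set E) : Prop :=
  (Γ.restrict T).Connected ∧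
    ∀ (v : V) (W : (Γ.restrict T).Walk v v), ¬ (Γ.restrict T).IsCycle W

/-- A connected basis of a connected signed graph: a spanning tree if `Σ` is
balanced; otherwise a spanning tree plus one extra edge closing an unbalanced
cycle. -/
def IsConnectedBasis (Γ : SGraph V E) (B : Set E) : Prop :=
  (Γ.Balanced ∧ Γ.IsSpanningTree B) ∨
    (¬ Γ.Balanced ∧ ∃ (T : Set E) (e : E), Γ.IsSpanningTree T ∧ e ∉ T ∧ B = insert e T ∧
      ∀ (v : V) (W : (Γ.restrict B).Walk v v), (Γ.restrict B).IsCycle W → W.sgn = -1)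

/-- Switching at a vertex `v`: the sign of every non-loop edge incident with `v`
is negated; loops keep their sign. -/
def switchAt (Γ : SGraph V E) (v : V) : SGraph V E :=
  { ends := Γ.ends,
    sign := fun e => if ((Γ.ends e).1 = v ↔ (Γ.ends e).2 = v) then Γ.sign e else -Γ.sign e }

/-- Switching at a set `S` of vertices (the composite of the switchings at the
vertices of `S`): the sign of an edge is negated iff exactly one of its
endpoints lies in `S`. -/
def switchSet (Γ : SGraph V E) (S : Set V) : SGraph V E :=
  { ends := Γ.ends,
    sign := fun e => if ((Γ.ends e).1 ∈ S ↔ (Γ.ends e).2 ∈ S) then Γ.sign e else -Γ.sign e }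

/-- Isomorphism of signed graphs (as undirected signed multigraphs). -/
def Iso {V₁ E₁ V₂ E₂ : Type*} (Γ₁ : SGraph V₁ E₁) (Γ₂ : SGraph V₂ E₂) : Prop :=
  ∃ (φ : V₁ ≃ V₂) (ψ : E₁ ≃ E₂), ∀ e : E₁,
    (Γ₂.ends (ψ e) = (φ (Γ₁.ends e).1, φ (Γ₁.ends e).2) ∨
      Γ₂.ends (ψ e) = (φ (Γ₁.ends e).2, φ (Γ₁.ends e).1)) ∧
    Γ₂.sign (ψ e) = Γ₁.sign e

/-- Switching equivalence: isomorphism after switching at a set of vertices. -/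
def SwitchEquiv {V₁ E₁ V₂ E₂ : Type*} (Γ₁ : SGraph V₁ E₁) (Γ₂ : SGraph V₂ E₂) : Prop :=
  ∃ S : Set V₁, Iso (Γ₁.switchSet S) Γ₂

/-- Disjoint union of signed graphs. -/
def disjUnion {V₁ E₁ V₂ E₂ : Type*} (Γ₁ : SGraph V₁ E₁) (Γ₂ : SGraph V₂ E₂) :
    SGraph (V₁ ⊕ V₂) (E₁ ⊕ E₂) where
  ends := fun e => match e with
    | .inl e => (Sum.inl (Γ₁.ends e).1, Sum.inl (Γ₁.ends e).2)
    | .inr e => (Sum.inr (Γ₂.ends e).1, Sum.inr (Γ₂.ends e).2)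
  sign := fun e => match e with
    | .inl e => Γ₁.sign e
    | .inr e => Γ₂.sign e

/-- The difference operator `δ : G^V → G^E`,
`(δg)(e) = ω(v,e)·g(v) + ω(u,e)·g(u)` for `e = uv`. -/
def deltaHom (Γ : SGraph V E) (ω : E → Bool → ℤˣ) (G : Type*) [AddCommGroup G] :
    (V → G) →+ (E → G) :=
  AddMonoidHom.mk'
    (fun g e => (ω e true : ℤ) • g ((Γ.ends e).1) + (ω e false : ℤ) • g ((Γ.ends e).2))
    (by
      intro a b
      funext e
      simp only [Pi.add_apply, smul_add]
      abel)

end SGraph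

end SignedGraphs

/-!
The `G`-flows are the kernel of the boundary map `∂ : G^E → G^V`, so their number is
`|G|^{|E|-|V|} |coker ∂|`. Dualising with `Hom(-, 𝕋)`, the cokernel of `∂` has as many elements as
the kernel of its transpose, the coboundary `δ` with coefficients in `Ĝ ≅ G`. A function in `ker δ`
satisfies `g(v) = σ(e) g(u)` along every edge `e = uv`, so it is determined by one value on each
component, arbitrary on a balanced component (all closed walks there are positive) and of order
dividing `2` on an unbalanced one; the `2`-torsion of `Ĝ` is dual to `G/2G`. Hence there are
`|G|^{|E|-|V|+k_b} |G/2G|^{k_u}` flows. Applying this to every spanning subgraph and sieving over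
the supports of the flows by inclusion–exclusion gives the Tutte expansion; the case `G = ℤ/3`
shows that no exponent `|A|-|V|+k_b(A)` is negative.
-/

lemma AddMonoidHom.card_ker_mul_card_eq {A B : Type*} [AddGroup A] [AddGroup B] (φ : A →+ B) :
    Nat.card φ.ker * Nat.card B = Nat.card A * Nat.card (B ⧸ φ.range) := by
  rw [φ.range.card_eq_card_quotient_mul_card_addSubgroup,
    φ.ker.card_eq_card_quotient_mul_card_addSubgroup,
    Nat.card_congr (QuotientAddGroup.quotientKerEquivRange φ).toEquiv]
  ring

section Characters

variable {A : Type*} [AddCommGroup A]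

lemma card_addMonoidHom_circle [Finite A] : Nat.card (A →+ Additive Circle) = Nat.card A :=
  calc Nat.card (A →+ Additive Circle) = Nat.card (AddChar A ℂ) :=
        Nat.card_congr (AddChar.toAddMonoidHomEquiv.symm.trans AddChar.circleEquivComplex.toEquiv)
    _ = Nat.card A := by
        cases nonempty_fintype A
        simp [Nat.card_eq_fintype_card]

lemma card_addMonoidHom_circle_vanishing [Finite A] (K : AddSubgroup A) :
    Nat.card {φ : A →+ Additive Circle // ∀ x ∈ K, φ x = 0} = Nat.card (A ⧸ K) := by
  rw [← card_addMonoidHom_circle (A := A ⧸ K),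
    ← Nat.card_congr (AddMonoidHom.domRestrictHomKerEquiv (Additive Circle) K).toEquiv]
  refine Nat.card_congr (Equiv.subtypeEquivRight fun φ => ?_)
  simp [AddMonoidHom.mem_ker, DFunLike.ext_iff]

lemma add_self_eq_zero_iff_forall_twoG {D : Type*} [AddCommGroup D] (ψ : A →+ D) :
    ψ + ψ = 0 ↔ ∀ x ∈ twoG A, ψ x = 0 := by
  refine ⟨fun h x ⟨y, hy⟩ => ?_, fun h => AddMonoidHom.ext fun y => ?_⟩
  · rw [← hy, show doubleHom A y = y + y from rfl, map_add, ← AddMonoidHom.add_apply, h,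
      AddMonoidHom.zero_apply]
  · exact (map_add ψ y y).symm.trans (h (y + y) ⟨y, rfl⟩)

end Characters

section UnitsSMul

variable {H : Type*} [AddCommGroup H]

lemma units_zsmul_zsmul (s : ℤˣ) (x : H) : (s : ℤ) • (s : ℤ) • x = x := by
  rw [smul_smul, ← Units.val_mul, Int.units_mul_self, Units.val_one, one_smul]

lemma units_zsmul_of_add_self_eq_zero {x : H} (hx : x + x = 0) (s : ℤˣ) : (s : ℤ) • x = x := by
  rcases Int.units_eq_one_or s with rfl | rfl
  · simp
  · simpa using neg_eq_of_add_eq_zero_left hx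

lemma zsmul_add_zsmul_eq_zero_iff (a b : ℤˣ) (x y : H) :
    (a : ℤ) • x + (b : ℤ) • y = 0 ↔ y = ((-(a * b) : ℤˣ) : ℤ) • x := by
  calc (a : ℤ) • x + (b : ℤ) • y = 0 ↔ (b : ℤ) • ((a : ℤ) • x + (b : ℤ) • y) = 0 :=
        ⟨fun h => by rw [h, smul_zero],
          fun h => by rw [← units_zsmul_zsmul b (_ + _), h, smul_zero]⟩
    _ ↔ y = -((b : ℤ) • (a : ℤ) • x) := by
        rw [smul_add, units_zsmul_zsmul, add_comm, eq_neg_iff_add_eq_zero]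
    _ ↔ _ := by rw [smul_smul, Units.val_neg, Units.val_mul, neg_smul, mul_comm]

end UnitsSMul

open Finset in
theorem card_forall_ne_zero_eq_sum {α E M : Type*} [Finite α] [Fintype E] [Zero M]
    (F : α → E → M) :
    (Nat.card {a // ∀ e, F a e ≠ 0} : ℤ) =
      ∑ A : Finset E, (-1) ^ #Aᶜ * (Nat.card {a // ∀ e ∉ A, F a e = 0} : ℤ) := by
  classical
  cases nonempty_fintype α
  have h := inclusion_exclusion_card_inf_compl univ fun e => univ.filter fun a => F a e = 0
  rw [powerset_univ, ← Equiv.sum_comp (compl_involutive.toPerm _)] at h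
  simp only [Nat.card_eq_fintype_card, Fintype.card_subtype]
  refine (Eq.trans ?_ h).trans (sum_congr rfl fun A _ => ?_)
  · congr 2
    ext a
    simp [mem_inf]
  · simp only [Function.Involutive.coe_toPerm]
    congr 3
    ext a
    simp [mem_inf]

noncomputable def supportedEquiv {E M : Type*} [Zero M] (A : Set E) :
    {g : E → M // ∀ e ∉ A, g e = 0} ≃ (A → M) where
  toFun g e := g.1 e
  invFun f := ⟨fun e => if h : e ∈ A then f ⟨e, h⟩ else 0, fun _ he => dif_neg he⟩
  left_inv g := Subtype.ext <| funext fun e => by by_cases h : e ∈ A <;> simp [h, g.2 e]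
  right_inv f := funext fun e => dif_pos e.2

namespace SGraph

variable {V E : Type*} {Γ : SGraph V E}

/-! ### Walks -/

namespace Walk

lemma verts_ne_nil : ∀ {u v : V} (W : Γ.Walk u v), W.verts ≠ []
  | _, _, .nil _ => List.cons_ne_nil _ _
  | _, _, .cons _ _ _ => List.cons_ne_nil _ _

@[simp] lemma srcs_nil (x : V) : (Walk.nil (Γ := Γ) x).srcs = [] := rfl

@[simp] lemma srcs_cons (e : E) (d : Bool) {w : V} (p : Γ.Walk (Γ.endpt e (!d)) w) :
    (Walk.cons e d p).srcs = Γ.endpt e d :: p.srcs :=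
  List.dropLast_cons_of_ne_nil (verts_ne_nil p)

@[simp] lemma edges_nil (x : V) : (Walk.nil (Γ := Γ) x).edges = [] := rfl

@[simp] lemma edges_cons (e : E) (d : Bool) {w : V} (p : Γ.Walk (Γ.endpt e (!d)) w) :
    (Walk.cons e d p).edges = e :: p.edges := rfl

@[simp] lemma sgn_nil (x : V) : (Walk.nil (Γ := Γ) x).sgn = 1 := rfl

@[simp] lemma sgn_cons (e : E) (d : Bool) {w : V} (p : Γ.Walk (Γ.endpt e (!d)) w) :
    (Walk.cons e d p).sgn = Γ.sign e * p.sgn := rfl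

@[simp] lemma nil_append {u v : V} (W : Γ.Walk u v) : (Walk.nil u).append W = W := rfl

@[simp] lemma cons_append (e : E) (d : Bool) {w x : V} (p : Γ.Walk (Γ.endpt e (!d)) w)
    (q : Γ.Walk w x) : (Walk.cons e d p).append q = Walk.cons e d (p.append q) := rfl

@[simp] lemma edges_append {u v w : V} (P : Γ.Walk u v) (Q : Γ.Walk v w) :
    (P.append Q).edges = P.edges ++ Q.edges := by
  induction P <;> simp_all

@[simp] lemma sgn_append {u v w : V} (P : Γ.Walk u v) (Q : Γ.Walk v w) :
    (P.append Q).sgn = P.sgn * Q.sgn := by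
  induction P <;> simp_all [mul_assoc]

lemma sgn_eq_one_of_edges_eq_nil {u v : V} (W : Γ.Walk u v) (h : W.edges = []) : W.sgn = 1 := by
  cases W <;> simp_all

def reverseStep (e : E) : (d : Bool) → Γ.Walk (Γ.endpt e (!d)) (Γ.endpt e d)
  | true => .cons e false (.nil _)
  | false => .cons e true (.nil _)

def reverse : ∀ {u v : V}, Γ.Walk u v → Γ.Walk v u
  | _, _, .nil x => .nil x
  | _, _, .cons e d p => p.reverse.append (reverseStep e d)

@[simp] lemma sgn_reverse {u v : V} (W : Γ.Walk u v) : W.reverse.sgn = W.sgn := by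
  induction W with
  | nil => rfl
  | cons e d p ih => cases d <;> simp [reverse, reverseStep, ih, mul_comm]

lemma exists_append_of_mem_srcs {u v x : V} (W : Γ.Walk u v) (hx : x ∈ W.srcs) :
    ∃ (P : Γ.Walk u x) (R : Γ.Walk x v), W = P.append R ∧ R.edges ≠ [] := by
  induction W with
  | nil => simp at hx
  | cons e d p ih =>
    by_cases h : x = Γ.endpt e d
    · subst h
      exact ⟨.nil _, .cons e d p, rfl, by simp⟩
    · obtain ⟨P, R, rfl, hR⟩ := ih ((List.mem_cons.mp (by simpa using hx)).resolve_left h)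
      exact ⟨.cons e d P, R, rfl, hR⟩

lemma exists_append_cons_of_mem_edges {u v : V} {e : E} (W : Γ.Walk u v) (he : e ∈ W.edges) :
    ∃ (d : Bool) (P : Γ.Walk u (Γ.endpt e d)) (R : Γ.Walk (Γ.endpt e (!d)) v),
      W = P.append (.cons e d R) := by
  induction W with
  | nil => simp at he
  | cons e' d' p ih =>
    by_cases h : e' = e
    · subst h
      exact ⟨d', .nil _, p, rfl⟩
    · obtain ⟨d, P, R, rfl⟩ := ih ((List.mem_cons.mp (by simpa using he)).resolve_left (Ne.symm h))
      exact ⟨d, .cons e' d' P, R, rfl⟩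

lemma exists_closed_of_not_nodup_srcs {u v : V} (W : Γ.Walk u v) (h : ¬ W.srcs.Nodup) :
    ∃ (x : V) (P : Γ.Walk u x) (Q : Γ.Walk x x) (R : Γ.Walk x v),
      W = P.append (Q.append R) ∧ Q.edges ≠ [] ∧ R.edges ≠ [] := by
  induction W with
  | nil => simp at h
  | cons e d p ih =>
    rw [srcs_cons, List.nodup_cons, not_and_or, not_not] at h
    rcases h with h | h
    · obtain ⟨P, R, rfl, hR⟩ := exists_append_of_mem_srcs p h
      exact ⟨_, .nil _, .cons e d P, R, rfl, by simp, hR⟩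
    · obtain ⟨x, P, Q, R, rfl, hQ, hR⟩ := ih h
      exact ⟨x, .cons e d P, Q, R, rfl, hQ, hR⟩

lemma exists_repeated_edge_of_not_nodup_edges {u v : V} (W : Γ.Walk u v)
    (h : ¬ W.edges.Nodup) :
    ∃ (e : E) (d d' : Bool) (P : Γ.Walk u (Γ.endpt e d))
      (M : Γ.Walk (Γ.endpt e (!d)) (Γ.endpt e d')) (R : Γ.Walk (Γ.endpt e (!d')) v),
      W = P.append (.cons e d (M.append (.cons e d' R))) := by
  induction W with
  | nil => simp at h
  | cons e d p ih =>
    rw [edges_cons, List.nodup_cons, not_and_or, not_not] at h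
    rcases h with h | h
    · obtain ⟨d', M, R, rfl⟩ := exists_append_cons_of_mem_edges p h
      exact ⟨e, d, d', .nil _, M, R, rfl⟩
    · obtain ⟨e', d₁, d₂, P, M, R, rfl⟩ := ih h
      exact ⟨e', d₁, d₂, .cons e d P, M, R, rfl⟩

end Walk

open Walk

/-! ### Components and balance -/

instance [Finite V] : Finite Γ.Components := Quot.finite _

lemma comp_endpt_not (e : E) (d : Bool) : Γ.comp (Γ.endpt e (!d)) = Γ.comp (Γ.endpt e d) := by
  cases d
  · exact Quot.sound ⟨e, Or.inl rfl⟩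
  · exact Quot.sound ⟨e, Or.inr rfl⟩

lemma comp_eq_of_walk {u v : V} (W : Γ.Walk u v) : Γ.comp u = Γ.comp v := by
  induction W with
  | nil => rfl
  | cons e d p ih => exact (comp_endpt_not e d).symm.trans ih

lemma nonempty_walk_of_comp_eq {u v : V} (h : Γ.comp u = Γ.comp v) :
    Nonempty (Γ.Walk u v) := by
  have h' := Quot.eqvGen_exact h
  clear h
  induction h' with
  | rel a b hab =>
    obtain ⟨e, he | he⟩ := hab
    · have w : Γ.Walk (Γ.ends e).1 (Γ.ends e).2 := .cons e true (.nil _)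
      rw [he] at w
      exact ⟨w⟩
    · have w : Γ.Walk (Γ.ends e).2 (Γ.ends e).1 := .cons e false (.nil _)
      rw [he] at w
      exact ⟨w⟩
  | refl a => exact ⟨.nil a⟩
  | symm a b _ ih => exact ⟨ih.some.reverse⟩
  | trans a b c _ _ ih₁ ih₂ => exact ⟨ih₁.some.append ih₂.some⟩

lemma exists_shorter_closed_walks {u : V} (W : Γ.Walk u u) (hW : W.edges ≠ [])
    (hc : ¬ Γ.IsCycle W) :
    ∃ (x y : V) (W₁ : Γ.Walk x x) (W₂ : Γ.Walk y y),
      W₁.edges.length < W.edges.length ∧ W₂.edges.length < W.edges.length ∧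
        W.sgn = W₁.sgn * W₂.sgn ∧ Γ.comp x = Γ.comp u ∧ Γ.comp y = Γ.comp u := by
  rw [IsCycle, not_and_or, not_and_or] at hc
  rcases hc with hc | hc | hc
  · exact absurd hW hc
  · obtain ⟨x, P, Q, R, rfl, hQ, hR⟩ := exists_closed_of_not_nodup_srcs W hc
    have := List.length_pos_iff.mpr hQ
    have := List.length_pos_iff.mpr hR
    refine ⟨x, u, Q, P.append R, ?_, ?_, ?_, (comp_eq_of_walk P).symm, rfl⟩ <;>
      simp [mul_left_comm] <;> omega
  · obtain ⟨e, d, d', P, M, R, rfl⟩ := exists_repeated_edge_of_not_nodup_edges W hc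
    cases d <;> cases d'
    -- `e` traversed twice in the same direction: `e` followed by `M` is closed
    case' false.false | true.true =>
      refine ⟨_, u, .cons e _ M, P.append (.cons e _ R), ?_, ?_, ?_,
        (comp_eq_of_walk P).symm, rfl⟩
    -- `e` traversed in opposite directions: `M` itself is closed
    case' false.true | true.false =>
      refine ⟨_, u, M, P.append R, ?_, ?_, ?_,
        (comp_endpt_not e _).trans (comp_eq_of_walk P).symm, rfl⟩
    all_goals simp only [edges_append, edges_cons, List.length_append, List.length_cons,
      sgn_append, sgn_cons]
    all_goals first
      | omega
      | ac_rfl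
      | calc _ = (Γ.sign e * Γ.sign e) * (M.sgn * (P.sgn * R.sgn)) := by ac_rfl
          _ = _ := by rw [Int.units_mul_self, one_mul]

lemma sgn_eq_one_of_isBalancedComponent {u : V} (hc : Γ.IsBalancedComponent (Γ.comp u))
    (W : Γ.Walk u u) : W.sgn = 1 := by
  induction hn : W.edges.length using Nat.strong_induction_on generalizing u with
  | _ n ih =>
    by_cases hW : W.edges = []
    · exact sgn_eq_one_of_edges_eq_nil W hW
    by_cases hcyc : Γ.IsCycle W
    · exact hc u rfl W hcyc
    obtain ⟨x, y, W₁, W₂, h₁, h₂, hsgn, hx, hy⟩ := exists_shorter_closed_walks W hW hcyc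
    rw [hsgn, ih _ (hn ▸ h₁) (hx ▸ hc) W₁ rfl, ih _ (hn ▸ h₂) (hy ▸ hc) W₂ rfl, mul_one]

lemma sgn_eq_of_isBalancedComponent {u v : V} (hc : Γ.IsBalancedComponent (Γ.comp v))
    (W₁ W₂ : Γ.Walk u v) : W₁.sgn = W₂.sgn := by
  have h := sgn_eq_one_of_isBalancedComponent ((comp_eq_of_walk W₁).symm ▸ hc)
    (W₁.append W₂.reverse)
  rwa [sgn_append, sgn_reverse, mul_eq_one_iff_eq_inv, Int.units_inv_eq_self] at h

lemma kb_add_ku [Finite V] (Γ : SGraph V E) : Γ.kb + Γ.ku = Γ.kAll := by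
  rw [kb, ku, kAll, ← Nat.card_sum, Nat.card_congr (Equiv.sumCompl _)]

lemma kAll_le_kAll_restrict [Finite V] (Γ : SGraph V E) (A : Set E) :
    Γ.kAll ≤ (Γ.restrict A).kAll := by
  have hlift : ∀ a b : V, (Γ.restrict A).Adj a b → Γ.comp a = Γ.comp b := by
    rintro a b ⟨e, h | h⟩
    · exact Quot.sound ⟨e.1, Or.inl h⟩
    · exact Quot.sound ⟨e.1, Or.inr h⟩
  refine Nat.card_le_card_of_surjective (Quot.lift Γ.comp hlift) fun c => ?_
  obtain ⟨v, rfl⟩ := Quot.mk_surjective c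
  exact ⟨Quot.mk _ v, rfl⟩

/-! ### Signed-constant functions -/

variable {H : Type*} [AddCommGroup H]

def IsSignedConstant (Γ : SGraph V E) (g : V → H) : Prop :=
  ∀ e, g (Γ.ends e).2 = (Γ.sign e : ℤ) • g (Γ.ends e).1

lemma deltaHom_apply (ω : E → Bool → ℤˣ) (g : V → H) (e : E) :
    Γ.deltaHom ω H g e = (ω e true : ℤ) • g (Γ.ends e).1 + (ω e false : ℤ) • g (Γ.ends e).2 :=
  rfl

lemma mem_ker_deltaHom_iff {ω : E → Bool → ℤˣ} (hω : Γ.IsCompatible ω) (g : V → H) :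
    g ∈ (Γ.deltaHom ω H).ker ↔ Γ.IsSignedConstant g := by
  simp only [AddMonoidHom.mem_ker, funext_iff, Pi.zero_apply, deltaHom_apply]
  exact forall_congr' fun e => hω e ▸ zsmul_add_zsmul_eq_zero_iff _ _ _ _

namespace IsSignedConstant

variable {g : V → H}

lemma apply_endpt_not (hg : Γ.IsSignedConstant g) (e : E) (d : Bool) :
    g (Γ.endpt e (!d)) = (Γ.sign e : ℤ) • g (Γ.endpt e d) := by
  cases d
  · show g (Γ.ends e).1 = (Γ.sign e : ℤ) • g (Γ.ends e).2
    rw [hg e, units_zsmul_zsmul]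
  · exact hg e

lemma apply_eq_sgn_zsmul (hg : Γ.IsSignedConstant g) {u v : V} (W : Γ.Walk u v) :
    g v = (W.sgn : ℤ) • g u := by
  induction W with
  | nil => simp
  | cons e d p ih => rw [ih, hg.apply_endpt_not, smul_smul, sgn_cons, Units.val_mul, mul_comm]

lemma add_self_eq_zero (hg : Γ.IsSignedConstant g) {v : V}
    (hv : ¬ Γ.IsBalancedComponent (Γ.comp v)) : g v + g v = 0 := by
  simp only [IsBalancedComponent, not_forall] at hv
  obtain ⟨x, hx, W, -, hW⟩ := hv
  have hx0 : g x + g x = 0 := by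
    have h := hg.apply_eq_sgn_zsmul W
    rw [(Int.units_eq_one_or W.sgn).resolve_left hW] at h
    exact eq_neg_iff_add_eq_zero.mp (by simpa using h)
  rw [hg.apply_eq_sgn_zsmul (nonempty_walk_of_comp_eq hx).some, ← smul_add, hx0, smul_zero]

end IsSignedConstant

lemma sgn_zsmul_eq_of_walks {u₁ u₂ v : V} (hu : u₁ = u₂) (W₁ : Γ.Walk u₁ v) (W₂ : Γ.Walk u₂ v)
    {x : H} (hx : ¬ Γ.IsBalancedComponent (Γ.comp v) → x + x = 0) :
    (W₁.sgn : ℤ) • x = (W₂.sgn : ℤ) • x := by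
  subst hu
  by_cases hc : Γ.IsBalancedComponent (Γ.comp v)
  · rw [sgn_eq_of_isBalancedComponent hc W₁ W₂]
  · rw [units_zsmul_of_add_self_eq_zero (hx hc), units_zsmul_of_add_self_eq_zero (hx hc)]

variable (Γ) in
noncomputable def walkFromOut (v : V) : Γ.Walk (Γ.comp v).out v :=
  (nonempty_walk_of_comp_eq (Quot.out_eq _)).some

lemma sgn_walkFromOut_zsmul {u v : V} (W : Γ.Walk u v) {x : H}
    (hx : ¬ Γ.IsBalancedComponent (Γ.comp v) → x + x = 0) :
    ((Γ.walkFromOut v).sgn : ℤ) • x = (W.sgn : ℤ) • ((Γ.walkFromOut u).sgn : ℤ) • x := by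
  have hu : (Γ.comp v).out = (Γ.comp u).out := by rw [comp_eq_of_walk W]
  rw [sgn_zsmul_eq_of_walks hu _ ((Γ.walkFromOut u).append W) hx, sgn_append, Units.val_mul,
    smul_smul, mul_comm]

variable (Γ H) in
noncomputable def signedConstantEquiv :
    {g : V → H // Γ.IsSignedConstant g} ≃
      ((c : Γ.Components) → {x : H // ¬ Γ.IsBalancedComponent c → x + x = 0}) where
  toFun g c := ⟨g.1 c.out, fun hc =>
    g.2.add_self_eq_zero (by rwa [show Γ.comp c.out = c from Quot.out_eq c])⟩
  invFun φ := ⟨fun v => ((Γ.walkFromOut v).sgn : ℤ) • (φ (Γ.comp v)).1, fun e => by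
    have hφ : (φ (Γ.comp (Γ.ends e).2)).1 = (φ (Γ.comp (Γ.ends e).1)).1 :=
      congrArg (fun c => (φ c).1) (comp_endpt_not (Γ := Γ) e true)
    dsimp only
    rw [← hφ]
    exact (sgn_walkFromOut_zsmul (.cons e true (.nil _) : Γ.Walk (Γ.ends e).1 (Γ.ends e).2)
      (φ _).2).trans (by
        show ((Γ.sign e * 1 : ℤˣ) : ℤ) • ((Γ.walkFromOut (Γ.ends e).1).sgn : ℤ) • _ = _
        rw [mul_one])⟩
  left_inv g := Subtype.ext (funext fun v => (g.2.apply_eq_sgn_zsmul (Γ.walkFromOut v)).symm)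
  right_inv φ := funext fun c => Subtype.ext <| by
    have hc : Γ.comp c.out = c := Quot.out_eq c
    have hφ : (φ (Γ.comp c.out)).1 = (φ c).1 := by rw [hc]
    show ((Γ.walkFromOut c.out).sgn : ℤ) • (φ (Γ.comp c.out)).1 = (φ c).1
    rw [sgn_zsmul_eq_of_walks (by rw [hc]) _ (.nil c.out) (φ _).2, sgn_nil, Units.val_one,
      one_smul, hφ]

lemma card_signedConstant [Finite V] :
    Nat.card {g : V → H // Γ.IsSignedConstant g} =
      Nat.card H ^ Γ.kb * Nat.card {x : H // x + x = 0} ^ Γ.ku := by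
  rw [Nat.card_congr ((signedConstantEquiv Γ H).trans
    ((Equiv.piEquivPiSubtypeProd Γ.IsBalancedComponent _).trans
      (Equiv.prodCongr
        (Equiv.piCongrRight fun c => Equiv.subtypeUnivEquiv fun _ h => absurd c.2 h)
        (Equiv.piCongrRight fun c =>
          Equiv.subtypeEquivRight fun _ => ⟨fun h => h c.2, fun h _ => h⟩)))),
    Nat.card_prod, Nat.card_fun, Nat.card_fun, kb, ku]

/-! ### Counting flows -/

variable (Γ) in
noncomputable def boundary [Fintype E] (ω : E → Bool → ℤˣ) (G : Type*) [AddCommGroup G] :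
    (E → G) →+ (V → G) :=
  AddMonoidHom.mk' (fun f v => ∑ e : E,
    ((if Γ.endpt e true = v then (ω e true : ℤ) • f e else 0) +
      (if Γ.endpt e false = v then (ω e false : ℤ) • f e else 0)))
    (fun f g => funext fun v => by
      simp only [Pi.add_apply, smul_add, ← Finset.sum_add_distrib]
      exact Finset.sum_congr rfl fun e _ => by split_ifs <;> abel)

variable {ω : E → Bool → ℤˣ} {G : Type*} [AddCommGroup G]

lemma isFlow_iff_mem_ker_boundary [Fintype E] (f : E → G) :
    Γ.IsFlow ω f ↔ f ∈ (Γ.boundary ω G).ker := by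
  simp only [IsFlow, finsum_eq_sum_of_fintype, AddMonoidHom.mem_ker, funext_iff]
  rfl

lemma boundary_single [Fintype E] (e : E) (x : G) :
    Γ.boundary ω G (Pi.single e x) =
      Pi.single (Γ.endpt e true) ((ω e true : ℤ) • x) +
        Pi.single (Γ.endpt e false) ((ω e false : ℤ) • x) := by
  funext v
  show ∑ e' : E, _ = _
  rw [Finset.sum_eq_single e (fun e' _ he' => by simp [he']) (by simp)]
  simp [Pi.single_apply, eq_comm]

section Duality

variable [Fintype V] [Fintype E] {D : Type*} [AddCommGroup D]

/-- `δ` on `Hom(G, D)` is the transpose of `∂`. -/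
lemma map_boundary_single (φ : (V → G) →+ D) (e : E) (x : G) :
    φ (Γ.boundary ω G (Pi.single e x)) =
      Γ.deltaHom ω (G →+ D) (Pi.addMonoidHomAddEquiv (fun _ => G) D φ) e x := by
  rw [boundary_single, map_add, deltaHom_apply, AddMonoidHom.add_apply, AddMonoidHom.smul_apply,
    AddMonoidHom.smul_apply, Pi.single_smul', Pi.single_smul', map_zsmul, map_zsmul]
  rfl

lemma forall_range_boundary_eq_zero_iff (φ : (V → G) →+ D) :
    (∀ y ∈ (Γ.boundary ω G).range, φ y = 0) ↔
      Pi.addMonoidHomAddEquiv (fun _ => G) D φ ∈ (Γ.deltaHom ω (G →+ D)).ker := by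
  rw [AddMonoidHom.mem_ker]
  constructor
  · intro h
    funext e
    ext x
    rw [← map_boundary_single]
    exact h _ ⟨_, rfl⟩
  · rintro h _ ⟨f, rfl⟩
    have : φ.comp (Γ.boundary ω G) = 0 := AddMonoidHom.functions_ext _ _ _ fun e x => by
      simp [map_boundary_single, h]
    exact DFunLike.congr_fun this f

end Duality

lemma card_quotient_range_boundary [Finite V] [Fintype E] [Finite G] (hω : Γ.IsCompatible ω) :
    Nat.card ((V → G) ⧸ (Γ.boundary ω G).range) =
      Nat.card G ^ Γ.kb * Nat.card (G ⧸ twoG G) ^ Γ.ku := by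
  cases nonempty_fintype V
  rw [← card_addMonoidHom_circle_vanishing,
    Nat.card_congr ((Pi.addMonoidHomAddEquiv (fun _ => G) (Additive Circle)).toEquiv.subtypeEquiv
      forall_range_boundary_eq_zero_iff),
    Nat.card_congr (Equiv.subtypeEquivRight (mem_ker_deltaHom_iff hω)), card_signedConstant,
    card_addMonoidHom_circle, ← card_addMonoidHom_circle_vanishing]
  congr 2
  exact Nat.card_congr (Equiv.subtypeEquivRight add_self_eq_zero_iff_forall_twoG)

theorem card_flows_mul_card_pow [Finite V] [Finite E] [Finite G] (hω : Γ.IsCompatible ω) :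
    Nat.card {f : E → G // Γ.IsFlow ω f} * Nat.card G ^ Nat.card V =
      Nat.card G ^ (Nat.card E + Γ.kb) * Nat.card (G ⧸ twoG G) ^ Γ.ku := by
  cases nonempty_fintype E
  rw [Nat.card_congr (Equiv.subtypeEquivRight isFlow_iff_mem_ker_boundary),
    ← Nat.card_fun (α := V) (β := G), AddMonoidHom.card_ker_mul_card_eq, Nat.card_fun,
    card_quotient_range_boundary hω, pow_add, mul_assoc]

lemma exists_isCompatible (Γ : SGraph V E) : ∃ ω, Γ.IsCompatible ω :=
  ⟨fun e b => if b then 1 else -Γ.sign e, fun e => by simp⟩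

lemma isFlow_zero : Γ.IsFlow ω (0 : E → G) := fun v => by simp

lemma twoG_zmod_three : twoG (ZMod 3) = ⊤ :=
  (AddSubgroup.eq_top_iff' _).mpr fun x => ⟨2 * x, by revert x; decide⟩

/-- Count `ℤ/3`-flows: as `2 (ℤ/3) = ℤ/3` there are `3 ^ (|E| + k_b - |V|)` of them, and the zero
flow is one. -/
lemma card_le_card_add_kb [Finite V] [Finite E] (Γ : SGraph V E) :
    Nat.card V ≤ Nat.card E + Γ.kb := by
  obtain ⟨ω, hω⟩ := exists_isCompatible Γ
  have h := card_flows_mul_card_pow (G := ZMod 3) hω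
  have h₁ : Nat.card (ZMod 3 ⧸ twoG (ZMod 3)) = 1 := by
    rw [twoG_zmod_three]
    exact AddSubgroup.index_top
  rw [h₁, one_pow, mul_one, Nat.card_zmod] at h
  have : Nonempty {f : E → ZMod 3 // Γ.IsFlow ω f} := ⟨⟨0, isFlow_zero⟩⟩
  exact (Nat.pow_le_pow_iff_right (by norm_num)).mp (h ▸ Nat.le_mul_of_pos_left _ Nat.card_pos)

lemma card_le_card_add_kAll [Finite V] [Finite E] (Γ : SGraph V E) :
    Nat.card V ≤ Nat.card E + Γ.kAll :=
  (card_le_card_add_kb Γ).trans (by have := kb_add_ku Γ; omega)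

lemma card_le_card_add_kb_restrict [Finite V] (Γ : SGraph V E) (A : Finset E) :
    Nat.card V ≤ A.card + (Γ.restrict (A : Set E)).kb := by
  simpa [Nat.card_coe_set_eq, Set.ncard_coe_finset] using card_le_card_add_kb (Γ.restrict A)

lemma isFlow_iff_isFlow_restrict [Finite E] {A : Finset E} {g : E → G} (hg : ∀ e ∉ A, g e = 0) :
    Γ.IsFlow ω g ↔ (Γ.restrict (A : Set E)).IsFlow (fun e => ω e) (fun e => g e) := by
  refine forall_congr' fun v => Iff.of_eq (congrArg (· = 0) ?_)
  rw [finsum_eq_sum_of_support_subset _ (s := A) fun e he => by_contra fun heA => he (by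
      simp [hg e heA]), ← finsum_mem_coe_finset, ← finsum_subtype_eq_finsum_cond]
  rfl

lemma card_supported_flows [Finite V] [Finite E] [Finite G] (hω : Γ.IsCompatible ω)
    (A : Finset E) :
    Nat.card {f : E → G // Γ.IsFlow ω f ∧ ∀ e ∉ A, f e = 0} =
      Nat.card G ^ (A.card + (Γ.restrict (A : Set E)).kb - Nat.card V) *
        Nat.card (G ⧸ twoG G) ^ (Γ.restrict (A : Set E)).ku := by
  have hcount := card_flows_mul_card_pow (Γ := Γ.restrict (A : Set E)) (G := G)
    (ω := fun e => ω e) fun e => hω e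
  rw [Nat.card_coe_set_eq, Set.ncard_coe_finset,
    ← Nat.sub_add_cancel (card_le_card_add_kb_restrict Γ A), pow_add, mul_right_comm] at hcount
  refine Nat.eq_of_mul_eq_mul_right (pow_pos Nat.card_pos _) (Eq.trans ?_ hcount)
  congr 1
  exact Nat.card_congr ((Equiv.subtypeEquivRight fun _ => and_comm).trans
    ((Equiv.subtypeSubtypeEquivSubtypeInter (fun g : E → G => ∀ e ∉ A, g e = 0) _).symm.trans
      ((supportedEquiv (A : Set E)).subtypeEquiv fun g => isFlow_iff_isFlow_restrict g.2)))

lemma card_nowhereZero_flows_eq_sum [Fintype E] [Finite G] :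
    (Nat.card {f : E → G // Γ.IsFlow ω f ∧ ∀ e, f e ≠ 0} : ℤ) =
      ∑ A : Finset E,
        (-1) ^ Aᶜ.card * (Nat.card {f : E → G // Γ.IsFlow ω f ∧ ∀ e ∉ A, f e = 0} : ℤ) := by
  have hflows (p : (E → G) → Prop) :
      Nat.card {f : {f : E → G // Γ.IsFlow ω f} // p f} = Nat.card {f // Γ.IsFlow ω f ∧ p f} :=
    Nat.card_congr (Equiv.subtypeSubtypeEquivSubtypeInter _ p)
  simp only [← hflows]
  exact card_forall_ne_zero_eq_sum fun f : {f : E → G // Γ.IsFlow ω f} => f.1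

end SGraph

lemma signedTutte_term_eq {m a n k kA kb ku : ℕ} (x q : ℚ) (ha : a ≤ m) (hn : n ≤ a + kb)
    (hn' : n ≤ m + k) (hk : k ≤ kA) (hkA : kb + ku = kA) :
    (-1) ^ (m - a) * (x ^ (a + kb - n) * q ^ ku) =
      (-1) ^ (m + k - n) *
        ((0 - 1) ^ (kA - k) * (1 - x - 1) ^ (a + kb - n) * (1 - q - 1) ^ ku) := by
  have hsign : (-1 : ℚ) ^ (m - a) =
      (-1) ^ (m + k - n) * (-1) ^ (kA - k) * (-1) ^ (a + kb - n) * (-1) ^ ku := by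
    rw [← pow_add, ← pow_add, ← pow_add, neg_one_pow_eq_pow_mod_two,
      neg_one_pow_eq_pow_mod_two (n := _ + _)]
    congr 1
    omega
  rw [zero_sub, sub_sub_cancel_left, sub_sub_cancel_left, neg_pow x, neg_pow q, hsign]
  ring

section Statement

open SGraph

/-- Theorem 5.3: the number of nowhere-zero `G`-flows is
`(−1)^{|E|−|V|+k(Γ)} · T_Σ(0, 1−|G|, 1−|G|/|2G|)`. -/
theorem card_nowhereZero_flows_eq_signedTutte
    (V E : Type) [Finite V] [Finite E] (Γ : SGraph V E)
    (ω : E → Bool → ℤˣ) (hω : Γ.IsCompatible ω)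
    (G : Type) [AddCommGroup G] [Finite G] :
    (Nat.card {f : E → G // Γ.IsFlow ω f ∧ ∀ e : E, f e ≠ 0} : ℚ) =
      (-1 : ℚ) ^ ((Nat.card E + Γ.kAll) - Nat.card V) *
        Γ.signedTutte (0 : ℚ) (1 - (Nat.card G : ℚ))
          (1 - (Nat.card G : ℚ) / (Nat.card (twoG G) : ℚ)) := by
  cases nonempty_fintype E
  have hquot : (Nat.card G : ℚ) / Nat.card (twoG G) = Nat.card (G ⧸ twoG G) := by
    rw [(twoG G).card_eq_card_quotient_mul_card_addSubgroup, Nat.cast_mul,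
      mul_div_cancel_right₀ _ (Nat.cast_ne_zero.mpr Nat.card_pos.ne')]
  rw [← Int.cast_natCast, card_nowhereZero_flows_eq_sum, signedTutte, finsum_eq_sum_of_fintype,
    Finset.mul_sum, hquot]
  push_cast
  refine Finset.sum_congr rfl fun A _ => ?_
  rw [card_supported_flows hω A, Finset.card_compl, ← Nat.card_eq_fintype_card]
  push_cast
  exact signedTutte_term_eq _ _ (Nat.card_eq_fintype_card (α := E) ▸ A.card_le_univ)
    (card_le_card_add_kb_restrict Γ A) (card_le_card_add_kAll Γ) (kAll_le_kAll_restrict Γ A)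
    (kb_add_ku _)

end Statement
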